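/- arXiv:0902.2842 — 2 statements merged into one kernel-verified Lean document; each statement's English description precedes it below -/
import Mathlib

section
/- Let k be a commutative ring with identity and let d < n be positive integers. Then J(n,d) is contained in the kernel of ρ_{λ(n,d)} : k[S_n] → End_k(k𝒯_{λ(n,d)}); equivalently, the generator y_d acts as zero on the tabloid module k𝒯_{λ(n,d)}. -/
open Finset

variable {n : ℕ}

/-- The parts of a partition sorted in weakly decreasing order, `μ_1 ≥ μ_2 ≥ …`. -/
def sortedParts (μ : Nat.Partition n) : List ℕ := μ.parts.sort (· ≥ ·)

/-- `μ` dominates `l`: for every `k`, `μ_1 + ⋯ + μ_k ≥ l_1 + ⋯ + l_k`. -/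
def Dominates (μ l : Nat.Partition n) : Prop :=
  ∀ k : ℕ, ((sortedParts l).take k).sum ≤ ((sortedParts μ).take k).sum

/-- A function `t : Fin n → Fin n` is a tabloid of shape `μ` if for each `i` the fiber
`t⁻¹(i)` (the `i`-th block of the ordered set partition) has exactly `μ_i` elements. -/
def IsTabloid (μ : Nat.Partition n) (t : Fin n → Fin n) : Prop :=
  ∀ i : Fin n, (Finset.univ.filter fun j => t j = i).card = (sortedParts μ).getD i.val 0

instance (μ : Nat.Partition n) : DecidablePred (IsTabloid μ) := fun t => by
  unfold IsTabloid; infer_instance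

/-- A tabloid of shape `μ`: an ordered partition of `{1, …, n}` into blocks of sizes
`μ_1, μ_2, …`, encoded by the function sending each element to the index of its block. -/
abbrev Tabloid (μ : Nat.Partition n) := {t : Fin n → Fin n // IsTabloid μ t}

theorem isTabloid_comp {μ : Nat.Partition n} {t : Fin n → Fin n} (ht : IsTabloid μ t)
    (σ : Equiv.Perm (Fin n)) : IsTabloid μ (t ∘ σ) := by
  intro i
  rw [← ht i]
  refine Finset.card_bij (fun j _ => σ j) ?_ ?_ ?_
  · intro a ha
    simp only [mem_filter, mem_univ, true_and, Function.comp_apply] at ha ⊢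
    exact ha
  · intro a _ b _ h
    exact σ.injective h
  · intro b hb
    simp only [mem_filter, mem_univ, true_and] at hb
    exact ⟨σ.symm b, by simp [hb], by simp⟩

/-- The (right) action of a permutation on tabloids of shape `μ`. -/
def permAct (μ : Nat.Partition n) (σ : Equiv.Perm (Fin n)) (t : Tabloid μ) : Tabloid μ :=
  ⟨t.val ∘ σ, isTabloid_comp t.prop σ⟩

/-- The action of `S_n` on the free module `k𝒯_μ` of tabloids, as a monoid homomorphism
into the endomorphism algebra: `(φ(σ) v) t = v (t ⋅ σ)`. -/
def permRep (k : Type) [CommRing k] (μ : Nat.Partition n) :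
    Equiv.Perm (Fin n) →* Module.End k (Tabloid μ → k) where
  toFun σ := LinearMap.funLeft k k (permAct μ σ)
  map_one' := by
    ext v t
    simp [permAct, LinearMap.funLeft]
  map_mul' σ τ := by
    ext v t
    rfl

/-- The `k`-algebra homomorphism `ρ_μ : k[S_n] → End_k(k𝒯_μ)` defining the tabloid
representation of the symmetric group. -/
noncomputable def rho (k : Type) [CommRing k] (μ : Nat.Partition n) :
    MonoidAlgebra k (Equiv.Perm (Fin n)) →ₐ[k] Module.End k (Tabloid μ → k) :=
  MonoidAlgebra.lift k (Module.End k (Tabloid μ → k)) (Equiv.Perm (Fin n)) (permRep k μ)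

/-- The element `y_d = Σ_{τ ∈ S_{d+1}} sgn(τ) τ`, the sum over the subgroup of `S_n` of
permutations fixing (in 1-indexed terms) the points `d+2, …, n`. -/
noncomputable def yd (k : Type) [CommRing k] (n d : ℕ) : MonoidAlgebra k (Equiv.Perm (Fin n)) :=
  ∑ τ ∈ Finset.univ.filter (fun τ : Equiv.Perm (Fin n) => ∀ i : Fin n, d + 1 ≤ i.val → τ i = i),
    MonoidAlgebra.single τ ((Equiv.Perm.sign τ : ℤ) : k)

/-- For `d < n`, the two-sided ideal `J(n,d)` of `k[S_n]` generated by `y_d`, viewed as a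
`k`-submodule. -/
noncomputable def Jnd (k : Type) [CommRing k] (n d : ℕ) :
    Submodule k (MonoidAlgebra k (Equiv.Perm (Fin n))) :=
  Submodule.span k {x | ∃ a b : MonoidAlgebra k (Equiv.Perm (Fin n)), x = a * yd k n d * b}

/-!
A tabloid of shape `λ` with at most `d` parts has at most `d` nonempty blocks, so two of the
`d + 1` points permuted by `S_{d+1}` lie in the same block. Their transposition `s` belongs to
`S_{d+1}`, fixes the tabloid `t` and has sign `-1`, so the terms of `τ` and `s τ` cancel in
`(y_d v)(t) = Σ_{τ ∈ S_{d+1}} sgn(τ) v(t τ)`.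
-/

theorem IsTabloid.val_lt_card {μ : Nat.Partition n} {t : Fin n → Fin n} (ht : IsTabloid μ t)
    (a : Fin n) : (t a).val < Multiset.card μ.parts := by
  by_contra! hge
  have hempty := ht (t a)
  rw [List.getD_eq_default _ _ (by simpa [sortedParts] using hge)] at hempty
  have ha : a ∈ univ.filter fun j => t j = t a := by simp
  exact (card_pos.mpr ⟨a, ha⟩).ne' hempty

theorem IsTabloid.exists_ne_apply_eq {μ : Nat.Partition n} {t : Fin n → Fin n}
    (ht : IsTabloid μ t) {d : ℕ} (hdn : d < n) (hμ : Multiset.card μ.parts ≤ d) :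
    ∃ i j : Fin n, i ≠ j ∧ i.val ≤ d ∧ j.val ≤ d ∧ t i = t j := by
  let f : Fin (d + 1) → Fin d := fun m => ⟨t (Fin.castLE hdn m), (ht.val_lt_card _).trans_le hμ⟩
  obtain ⟨m, m', hne, hf⟩ := Fintype.exists_ne_map_eq_of_card_lt f (by simp)
  exact ⟨Fin.castLE hdn m, Fin.castLE hdn m', (Fin.castLE_injective hdn).ne hne,
    Nat.le_of_lt_succ m.isLt, Nat.le_of_lt_succ m'.isLt, Fin.ext (Fin.mk.inj hf)⟩

theorem permAct_mul (μ : Nat.Partition n) (σ τ : Equiv.Perm (Fin n)) (t : Tabloid μ) :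
    permAct μ (σ * τ) t = permAct μ τ (permAct μ σ t) :=
  rfl

theorem permAct_swap_of_apply_eq {μ : Nat.Partition n} {t : Tabloid μ} {i j : Fin n}
    (hij : t.val i = t.val j) : permAct μ (Equiv.swap i j) t = t := by
  refine Subtype.ext (funext fun x => ?_)
  simp only [permAct, Function.comp_apply, Equiv.swap_apply_def]
  split_ifs with hxi hxj
  · rw [hxi, hij]
  · rw [hxj, hij]
  · rfl

theorem swap_mul_apply_of_le {d : ℕ} {i j : Fin n} (hi : i.val ≤ d) (hj : j.val ≤ d)
    {τ : Equiv.Perm (Fin n)} (hτ : ∀ x : Fin n, d + 1 ≤ x.val → τ x = x) :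
    ∀ x : Fin n, d + 1 ≤ x.val → (Equiv.swap i j * τ) x = x := by
  intro x hx
  rw [Equiv.Perm.mul_apply, hτ x hx]
  exact Equiv.swap_apply_of_ne_of_ne (by rintro rfl; omega) (by rintro rfl; omega)

theorem sum_zsmul_eq_zero_of_mul_left_invariant {G M : Type*} [Group G] [AddCommGroup M]
    (χ : G →* ℤˣ) {H : Finset G} {f : G → M} {s : G} (hχs : χ s = -1) (hss : s * s = 1)
    (hsH : ∀ τ ∈ H, s * τ ∈ H) (hf : ∀ τ, f (s * τ) = f τ) :
    ∑ τ ∈ H, (χ τ : ℤ) • f τ = 0 := by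
  refine sum_involution (fun τ _ => s * τ) (fun τ _ => ?_) (fun τ _ _ h => ?_)
    (fun τ hτ => hsH τ hτ) (fun τ _ => by rw [← mul_assoc, hss, one_mul])
  · rw [hf, map_mul, hχs, Units.val_mul, Units.val_neg, Units.val_one, neg_one_mul, neg_smul,
      add_neg_cancel]
  · have hs : s = 1 := mul_eq_right.mp h
    rw [hs, map_one] at hχs
    exact absurd hχs (by decide)

theorem rho_yd_apply (k : Type) [CommRing k] (d : ℕ) (μ : Nat.Partition n)
    (v : Tabloid μ → k) (t : Tabloid μ) :
    rho k μ (yd k n d) v t =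
      ∑ τ ∈ univ.filter (fun τ : Equiv.Perm (Fin n) => ∀ i : Fin n, d + 1 ≤ i.val → τ i = i),
        (Equiv.Perm.sign τ : ℤ) • v (permAct μ τ t) := by
  simp [yd, rho, permRep, Int.cast_smul_eq_zsmul]

theorem rho_yd_eq_zero (k : Type) [CommRing k] {d : ℕ} (hdn : d < n) (μ : Nat.Partition n)
    (hμ : Multiset.card μ.parts ≤ d) : rho k μ (yd k n d) = 0 := by
  refine LinearMap.ext fun v => funext fun t => ?_
  obtain ⟨i, j, hij, hi, hj, htij⟩ := t.prop.exists_ne_apply_eq hdn hμ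
  rw [rho_yd_apply]
  refine sum_zsmul_eq_zero_of_mul_left_invariant Equiv.Perm.sign (Equiv.Perm.sign_swap hij)
    (Equiv.swap_mul_self i j) (fun τ hτ => ?_) (fun τ => ?_)
  · simp only [mem_filter, mem_univ, true_and] at hτ ⊢
    exact swap_mul_apply_of_le hi hj hτ
  · rw [permAct_mul, permAct_swap_of_apply_eq htij]

theorem span_mul_mul_le_ker {R A B : Type*} [CommSemiring R] [Semiring A] [Semiring B]
    [Algebra R A] [Algebra R B] (f : A →ₐ[R] B) {y : A} (hy : f y = 0) :
    Submodule.span R {x | ∃ a b : A, x = a * y * b} ≤ LinearMap.ker f.toLinearMap := by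
  rw [Submodule.span_le]
  rintro x ⟨a, b, rfl⟩
  simp [hy]

theorem statement3_general (k : Type) [CommRing k] (n d : ℕ) (hdn : d < n)
    (l : Nat.Partition n) (hl₁ : Multiset.card l.parts ≤ d) :
    Jnd k n d ≤ LinearMap.ker (rho k l).toLinearMap ∧ rho k l (yd k n d) = 0 := by
  have hy : rho k l (yd k n d) = 0 := rho_yd_eq_zero k hdn l hl₁
  exact ⟨span_mul_mul_le_ker (rho k l) hy, hy⟩

/-- over any commutative ring `k`, for positive integers `d < n` and with
`l = λ(n,d)` (the unique partition of `n` with at most `d` parts dominated by every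
partition of `n` with at most `d` parts), the ideal `J(n,d)` is contained in the kernel of
`ρ_{λ(n,d)}`; equivalently the generator `y_d` acts as zero on the tabloid module. -/
theorem statement3 (k : Type) [CommRing k] (n d : ℕ) (hd : 0 < d) (hdn : d < n)
    (l : Nat.Partition n) (hl₁ : Multiset.card l.parts ≤ d)
    (hl₂ : ∀ μ : Nat.Partition n, Multiset.card μ.parts ≤ d → Dominates μ l) :
    Jnd k n d ≤ LinearMap.ker (rho k l).toLinearMap ∧ rho k l (yd k n d) = 0 :=
  statement3_general k n d hdn l hl₁
end

section
/- Let k be a field of characteristic 2, n = 4 and λ = (2,2). Writing permutations of S_4 in one-line notation (σ(1)σ(2)σ(3)σ(4)), each of the eight permutations 2134, 2341, 2314, 1342, 3124, 1243, 4123, 1423 has RSK-shape (3,1), which dominates (2,2), and the sum of these eight permutations in k[S_4] acts as zero on the tabloid module k𝒯_{(2,2)} (i.e., lies in ker ρ_{(2,2)}). Consequently, the images in k[S_4]/ker(ρ_{(2,2)}) of the permutations of RSK-shape dominating (2,2) are k-linearly dependent, so they do not form a basis. -/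
open Finset

variable {n : ℕ}

/-- Schensted row insertion: insert `x` into a row, returning the new row and the bumped
entry (if any). -/
def insRow (x : ℕ) : List ℕ → List ℕ × Option ℕ
  | [] => ([x], none)
  | y :: ys =>
    if x < y then (x :: ys, some y)
    else
      let p := insRow x ys
      (y :: p.1, p.2)

/-- Schensted insertion of `x` into a tableau, given as its list of rows. -/
def insTab (x : ℕ) : List (List ℕ) → List (List ℕ)
  | [] => [[x]]
  | r :: rs =>
    match insRow x r with
    | (r', none) => r' :: rs
    | (r', some y) => r' :: insTab y rs

/-- The RSK-shape of a permutation `w`: the list of row lengths (equivalently, the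
partition of `n`) of the Robinson–Schensted insertion tableau of the word
`w(1), w(2), …, w(n)`. -/
def rskShape {n : ℕ} (w : Equiv.Perm (Fin n)) : List ℕ :=
  (((List.ofFn fun i : Fin n => (w i : ℕ))).foldl (fun T x => insTab x T) []).map List.length

/-- The shape `sh` (a weakly decreasing list of row lengths) dominates the partition `l`:
for every `k`, the sum of the first `k` entries of `sh` is at least `l_1 + ⋯ + l_k`. -/
def ShapeDominates {n : ℕ} (sh : List ℕ) (l : Nat.Partition n) : Prop :=
  ∀ k : ℕ, ((sortedParts l).take k).sum ≤ (sh.take k).sum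

/-- The partition `(2,2)` of `4`. -/
def lam22 : Nat.Partition 4 where
  parts := {2, 2}
  parts_pos := fun {i} hi => by
    simp only [Multiset.insert_eq_cons, Multiset.mem_cons, Multiset.mem_singleton] at hi
    omega
  parts_sum := by decide

open Equiv in
/-- The eight permutations `2134, 2341, 2314, 1342, 3124, 1243, 4123, 1423` of `S_4`
(one-line notation), written as products of transpositions of `{0,1,2,3}` (0-indexed). -/
def eightPerms : List (Equiv.Perm (Fin 4)) :=
  [ swap 0 1,                            -- 2134
    swap 0 1 * swap 1 2 * swap 2 3,      -- 2341
    swap 0 1 * swap 1 2,                 -- 2314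
    swap 1 2 * swap 2 3,                 -- 1342
    swap 1 2 * swap 0 1,                 -- 3124
    swap 2 3,                            -- 1243
    swap 2 3 * swap 1 2 * swap 0 1,      -- 4123
    swap 2 3 * swap 1 2 ]                -- 1423

/-! In characteristic `2`, an element `∑_{σ ∈ L} σ` of `k[S_n]` acts as zero on `k𝒯_μ` as soon as,
for every tabloid `t`, each tabloid occurs an even number of times among the `t ⋅ σ` with `σ ∈ L`:
the `t`-coordinate of `ρ_μ(∑ σ) v` is `∑ v (t ⋅ σ)`. For `μ = (2,2)` and the eight listed
permutations this parity condition is a finite check. Since all eight have RSK-shape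
`(3,1) ⊵ (2,2)`, their images in `k[S_4]/ker ρ_{(2,2)}` sum to zero with all coefficients `1`. -/

section Tabloids

variable {k : Type} [CommRing k] {μ : Nat.Partition n}

theorem rho_single (σ : Equiv.Perm (Fin n)) :
    rho k μ (MonoidAlgebra.single σ 1) = permRep k μ σ := by
  simp [rho, MonoidAlgebra.lift_single]

theorem rho_list_sum_single_apply (l : List (Equiv.Perm (Fin n))) (v : Tabloid μ → k)
    (t : Tabloid μ) :
    rho k μ (l.map fun σ => MonoidAlgebra.single σ 1).sum v t =
      (l.map fun σ => v (permAct μ σ t)).sum := by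
  induction l with
  | nil => simp
  | cons σ l ih => simp [rho_single, permRep, ih]

theorem List.sum_map_eq_zero_of_even_count {α R : Type*} [BEq α] [LawfulBEq α] [Ring R]
    [CharP R 2] {l : List α} (f : α → R) (h : ∀ a ∈ l, Even (l.count a)) :
    (l.map f).sum = 0 := by
  classical
  rw [Finset.sum_list_map_count]
  refine Finset.sum_eq_zero fun a ha => ?_
  obtain ⟨m, hm⟩ := h a (List.mem_toFinset.1 ha)
  calc _ = (m + m) • f a := by congr 1; convert hm
    _ = 0 := by rw [add_nsmul, CharTwo.add_self_eq_zero]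

theorem list_sum_single_mem_ker_rho_of_even_count [CharP k 2] {l : List (Equiv.Perm (Fin n))}
    (h : ∀ t : Tabloid μ, ∀ s ∈ l.map (permAct μ · t), Even ((l.map (permAct μ · t)).count s)) :
    (l.map fun σ => MonoidAlgebra.single σ (1 : k)).sum ∈
      LinearMap.ker (rho k μ).toLinearMap := by
  refine LinearMap.mem_ker.2 (LinearMap.ext fun v => funext fun t => ?_)
  have := List.sum_map_eq_zero_of_even_count v (h t)
  simpa [rho_list_sum_single_apply, List.map_map, Function.comp_def] using this

end Tabloids

theorem sortedParts_lam22 : sortedParts lam22 = [2, 2] := by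
  simp [sortedParts, lam22, Multiset.sort_cons, Multiset.sort_singleton]

theorem shapeDominates_three_one_lam22 : ShapeDominates [3, 1] lam22 := by
  intro m
  rw [sortedParts_lam22]
  rcases m with _ | _ | m <;> simp

theorem rskShape_of_mem_eightPerms : ∀ w ∈ eightPerms, rskShape w = [3, 1] := by
  decide

/- The hypothesis on `t` is `IsTabloid lam22 t` with `sortedParts lam22` already evaluated, which
the kernel cannot do on its own (`Multiset.sort` is not reducible by `decide`). -/
set_option maxRecDepth 100000 in
theorem even_count_comp_eightPerms : ∀ t : Fin 4 → Fin 4,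
    (∀ i : Fin 4, (univ.filter fun j => t j = i).card = [2, 2].getD i 0) →
    ∀ s ∈ eightPerms.map (fun σ : Equiv.Perm (Fin 4) => t ∘ ⇑σ),
      Even ((eightPerms.map (fun σ : Equiv.Perm (Fin 4) => t ∘ ⇑σ)).count s) := by
  decide

theorem even_count_permAct_eightPerms (t : Tabloid lam22) :
    ∀ s ∈ eightPerms.map (permAct lam22 · t),
      Even ((eightPerms.map (permAct lam22 · t)).count s) := by
  have hval : (eightPerms.map (permAct lam22 · t)).map Subtype.val =
      eightPerms.map (fun σ : Equiv.Perm (Fin 4) => t.val ∘ ⇑σ) :=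
    List.map_map ..
  have ht := t.prop
  rw [IsTabloid, sortedParts_lam22] at ht
  intro s hs
  rw [← List.count_map_of_injective _ _ Subtype.val_injective, hval]
  exact even_count_comp_eightPerms t.val ht s.val (hval ▸ List.mem_map_of_mem hs)

theorem eightPerms_sum_mem_ker_rho (k : Type) [Field k] [CharP k 2] :
    (eightPerms.map fun w => MonoidAlgebra.single w (1 : k)).sum ∈
      LinearMap.ker (rho k lam22).toLinearMap :=
  list_sum_single_mem_ker_rho_of_even_count even_count_permAct_eightPerms

theorem not_linearIndependent_of_sum_eq_zero {ι R M : Type*} [Ring R] [Nontrivial R]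
    [AddCommGroup M] [Module R M] {v : ι → M} {s : Finset ι} (hs : s.Nonempty)
    (h : ∑ i ∈ s, v i = 0) : ¬ LinearIndependent R v := by
  intro hv
  obtain ⟨i, hi⟩ := hs
  exact one_ne_zero (linearIndependent_iff'.1 hv s (fun _ => 1) (by simpa using h) i hi)

theorem shapeDominates_of_mem_eightPerms :
    ∀ w ∈ eightPerms, ShapeDominates (rskShape w) lam22 := fun w hw => by
  rw [rskShape_of_mem_eightPerms w hw]
  exact shapeDominates_three_one_lam22

theorem not_linearIndependent_mk_single_of_shapeDominates (k : Type) [Field k] [CharP k 2] :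
    ¬ LinearIndependent k
      (fun w : {w : Equiv.Perm (Fin 4) // ShapeDominates (rskShape w) lam22} =>
        (Submodule.Quotient.mk (MonoidAlgebra.single w.val 1) :
          MonoidAlgebra k (Equiv.Perm (Fin 4)) ⧸ LinearMap.ker (rho k lam22).toLinearMap)) := by
  classical
  let K := LinearMap.ker (rho k lam22).toLinearMap
  let s := eightPerms.toFinset.subtype fun w => ShapeDominates (rskShape w) lam22
  have hs : s.Nonempty :=
    ⟨⟨_, shapeDominates_of_mem_eightPerms _ (by decide : Equiv.swap 0 1 ∈ eightPerms)⟩,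
      Finset.mem_subtype.2 (by decide)⟩
  refine not_linearIndependent_of_sum_eq_zero hs ?_
  calc ∑ w ∈ s, K.mkQ (MonoidAlgebra.single w.val 1)
      = ∑ w ∈ eightPerms.toFinset, K.mkQ (MonoidAlgebra.single w 1) :=
        Finset.sum_subtype_of_mem (fun w => K.mkQ (MonoidAlgebra.single w 1)) fun w hw =>
          shapeDominates_of_mem_eightPerms w (List.mem_toFinset.1 hw)
    _ = K.mkQ (eightPerms.map fun w => MonoidAlgebra.single w (1 : k)).sum := by
        rw [List.sum_toFinset _ (by decide), map_list_sum, List.map_map]; rfl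
    _ = 0 := (Submodule.mkQ_apply _ _).trans
        ((Submodule.Quotient.mk_eq_zero _).2 (eightPerms_sum_mem_ker_rho k))

/-- over a field `k` of characteristic `2`, each of the eight listed
permutations of `S_4` has RSK-shape `(3,1)`, which dominates `(2,2)`; their sum lies in
the kernel of the tabloid representation `ρ_{(2,2)}`; consequently the images in
`k[S_4]/ker ρ_{(2,2)}` of the permutations of RSK-shape dominating `(2,2)` are linearly
dependent, hence cannot be the values of a basis. -/
theorem statement10 (k : Type) [Field k] [CharP k 2] :
    (∀ w ∈ eightPerms, rskShape w = [3, 1]) ∧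
    ShapeDominates [3, 1] lam22 ∧
    (eightPerms.map fun w => MonoidAlgebra.single w (1 : k)).sum ∈
      LinearMap.ker (rho k lam22).toLinearMap ∧
    ¬ LinearIndependent k
      (fun w : {w : Equiv.Perm (Fin 4) // ShapeDominates (rskShape w) lam22} =>
        (Submodule.Quotient.mk (MonoidAlgebra.single w.val 1) :
          MonoidAlgebra k (Equiv.Perm (Fin 4)) ⧸ LinearMap.ker (rho k lam22).toLinearMap)) ∧
    ¬ ∃ B : Module.Basis {w : Equiv.Perm (Fin 4) // ShapeDominates (rskShape w) lam22} k
        (MonoidAlgebra k (Equiv.Perm (Fin 4)) ⧸ LinearMap.ker (rho k lam22).toLinearMap),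
      ∀ w, B w = Submodule.Quotient.mk (MonoidAlgebra.single w.val 1) := by
  have hdep := not_linearIndependent_mk_single_of_shapeDominates k
  refine ⟨rskShape_of_mem_eightPerms, shapeDominates_three_one_lam22,
    eightPerms_sum_mem_ker_rho k, hdep, ?_⟩
  rintro ⟨B, hB⟩
  exact hdep (funext hB ▸ B.linearIndependent)
end
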